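/- Let F*A be a twisted group algebra of a free abelian group A with basis {x₁,…,x_n} over a field F, with x̄_i x̄_j = q_{ij} x̄_j x̄_i, and let C be the subgroup generated by x₁,…,x_r with F*C commutative. Fix an integer s > 0 and let λ' be the cocycle obtained from the cocycle of F*A by setting q'_{ij} = q_{ij} for 1 ≤ i ≤ r and q'_{ij} = q_{ij}^s for r < i, j ≤ n. If there exist monomials μ_j ∈ F*C (j = r+1,…,n) such that the elements μ_j x̄_j pairwise commute with respect to the multiplication twisted by λ', then the elements μ_j x̄_j^s (j = r+1,…,n) pairwise commute in F*A itself. -/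

import Mathlib

open Module Filter ENNReal

/-- A twisted group algebra `F*A` of the (additive) abelian group `A` over the field `F`:
the `F`-algebra `R` is free as an `F`-module with basis `{of a : a ∈ A}`, the basis elements
multiply according to a 2-cocycle with values in `Fˣ`, and the scalars of `F` are central
(built into the `Algebra F R` structure). -/
structure TwistedGroupAlgebra (F : Type*) [Field F] (A : Type*) [AddCommGroup A]
    (R : Type*) [Ring R] [Algebra F R] where
  of : A → R
  basis : Basis A F R
  basis_eq : ∀ a : A, basis a = of a
  cocycle : A → A → Fˣ
  of_mul : ∀ a b : A, of a * of b = (cocycle a b : F) • of (a + b)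
  of_zero : of 0 = 1

namespace TwistedGroupAlgebra

variable {F A R : Type*} [Field F] [AddCommGroup A] [Ring R] [Algebra F R]

/-- The subalgebra `F*C` of `F*A` determined by a subgroup `C ≤ A`, as the `F`-linear span
of the basis elements coming from `C`. -/
def sub (T : TwistedGroupAlgebra F A R) (C : AddSubgroup A) : Submodule F R :=
  Submodule.span F (T.of '' (C : Set A))

/-- `F*C` is commutative. -/
def IsCommutativeOn (T : TwistedGroupAlgebra F A R) (C : AddSubgroup A) : Prop :=
  ∀ c₁ ∈ C, ∀ c₂ ∈ C, Commute (T.of c₁) (T.of c₂)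

/-- `M` is finitely generated as an `F*C`-module: there is a finite subset `s` of `M` such that
the `F`-span of `{ c̄ • m : c ∈ C, m ∈ s }` (that is, the `F*C`-submodule generated by `s`)
is all of `M`. -/
def FGOn (T : TwistedGroupAlgebra F A R) (C : AddSubgroup A)
    (M : Type*) [AddCommGroup M] [Module R M] [Module F M] : Prop :=
  ∃ s : Finset M, Submodule.span F {x : M | ∃ c ∈ C, ∃ m ∈ s, x = T.of c • m} = ⊤

/-- `M` is torsion-free as an `F*C`-module: no nonzero element of `M` is annihilated by a
nonzero element of `F*C`. -/
def TorsionFreeOn (T : TwistedGroupAlgebra F A R) (C : AddSubgroup A)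
    (M : Type*) [AddCommGroup M] [Module R M] : Prop :=
  ∀ β ∈ T.sub C, ∀ m : M, β • m = 0 → β = 0 ∨ m = 0

/-- `M` is `F*C`-torsion: every element of `M` is annihilated by some nonzero element
of `F*C`. -/
def IsTorsionOn (T : TwistedGroupAlgebra F A R) (C : AddSubgroup A)
    (M : Type*) [AddCommGroup M] [Module R M] : Prop :=
  ∀ m : M, ∃ β ∈ T.sub C, β ≠ 0 ∧ β • m = 0

end TwistedGroupAlgebra

/-- The Gelfand–Kirillov dimension of a module `M` over an `F`-algebra `R`: the supremum over
finite-dimensional `F`-subspaces `V ≤ R` and `W ≤ M` of `limsup_n log dim_F (Vⁿ·W) / log n`. -/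
noncomputable def gkDim (F : Type*) [Field F] (R : Type*) [Ring R] [Algebra F R]
    (M : Type*) [AddCommGroup M] [Module R M] [Module F M] [IsScalarTower F R M] : ℝ≥0∞ :=
  ⨆ (V : Submodule F R) (_ : V.FG) (W : Submodule F M) (_ : W.FG),
    Filter.limsup
      (fun n : ℕ =>
        ENNReal.ofReal
          (Real.log (Module.finrank F
            ↥(Submodule.span F (Set.image2 (· • ·) ((V ^ n : Submodule F R) : Set R) (W : Set M))))
           / Real.log n))
      Filter.atTop

/-- The commutation pairing of a twisted group algebra: the scalar `λ(a,b)·λ(b,a)⁻¹ ∈ Fˣ`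
with `ā·b̄ = (pairing a b) • (b̄·ā)`. -/
def TwistedGroupAlgebra.pairing {F A R : Type*} [Field F] [AddCommGroup A] [Ring R]
    [Algebra F R] (T : TwistedGroupAlgebra F A R) (a b : A) : Fˣ :=
  T.cocycle a b * (T.cocycle b a)⁻¹

/-! Monomials `κ • ā` and `κ' • b̄` commute iff the commutation pairing
`⟨a, b⟩ = λ(a, b) λ(b, a)⁻¹` is trivial, and the cocycle identity makes this pairing a
bicharacter of `A`. Hence `λ` and `λ'` have the same pairing as soon as one argument lies in `C`,
and the pairing of `λ` is trivial on `C × C`. So the commutation of `μᵢ x̄ᵢ` and `μⱼ x̄ⱼ` for `λ'`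
says `⟨cᵢ, xⱼ⟩ ⟨xᵢ, cⱼ⟩ ⟨xᵢ, xⱼ⟩ˢ = 1`, and the pairing of the degrees `cᵢ + s xᵢ`, `cⱼ + s xⱼ`
of `μᵢ x̄ᵢˢ` and `μⱼ x̄ⱼˢ` is the `s`-th power of this product. -/

namespace TwistedGroupAlgebra

variable {F A R R' : Type*} [Field F] [AddCommGroup A] [Ring R] [Algebra F R] [Ring R']
  [Algebra F R'] (T : TwistedGroupAlgebra F A R)

theorem of_ne_zero (a : A) : T.of a ≠ 0 :=
  T.basis_eq a ▸ T.basis.ne_zero a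

theorem smul_of_left_injective (a : A) : Function.Injective fun κ : F => κ • T.of a :=
  smul_left_injective F (T.of_ne_zero a)

theorem cocycle_mul_cocycle_add (a b c : A) :
    T.cocycle a b * T.cocycle (a + b) c = T.cocycle b c * T.cocycle a (b + c) := by
  have h := mul_assoc (T.of a) (T.of b) (T.of c)
  rw [T.of_mul a b, smul_mul_assoc, T.of_mul, T.of_mul b c, mul_smul_comm, T.of_mul, smul_smul,
    smul_smul, ← add_assoc] at h
  exact Units.ext (T.smul_of_left_injective _ h)

theorem pairing_swap (a b : A) : T.pairing b a = (T.pairing a b)⁻¹ := by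
  simp [pairing, mul_comm]

theorem pairing_add_left (a b c : A) :
    T.pairing (a + b) c = T.pairing a c * T.pairing b c := by
  have J₁ := congrArg Units.val (T.cocycle_mul_cocycle_add a b c)
  have J₂ := congrArg Units.val (T.cocycle_mul_cocycle_add c a b)
  have J₃ := congrArg Units.val (T.cocycle_mul_cocycle_add a c b)
  rw [add_comm a c, add_comm c b] at J₃
  push_cast at J₁ J₂ J₃
  ext
  simp only [pairing, Units.val_mul, Units.val_inv_eq_inv_val]
  field_simp
  apply mul_right_cancel₀ (mul_ne_zero (T.cocycle a b).ne_zero (T.cocycle a (b + c)).ne_zero)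
  linear_combination (T.cocycle c a * T.cocycle c b * T.cocycle a (b + c) : F) * J₁
    + (T.cocycle b c * T.cocycle a (b + c) * T.cocycle a c : F) * J₂
    - (T.cocycle b c * T.cocycle a (b + c) * T.cocycle c a : F) * J₃

theorem pairing_add_right (a b c : A) :
    T.pairing a (b + c) = T.pairing a b * T.pairing a c := by
  rw [T.pairing_swap, T.pairing_add_left, mul_inv, ← T.pairing_swap, ← T.pairing_swap]

theorem pairing_add_add (a b c d : A) :
    T.pairing (a + b) (c + d) =
      T.pairing a c * T.pairing a d * (T.pairing b c * T.pairing b d) := by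
  rw [pairing_add_left, pairing_add_right, pairing_add_right]

def pairingLeft (b : A) : A →+ Additive Fˣ :=
  AddMonoidHom.mk' (fun a => Additive.ofMul (T.pairing a b))
    fun a a' => congrArg Additive.ofMul (T.pairing_add_left a a' b)

theorem pairing_nsmul_left (m : ℕ) (a b : A) : T.pairing (m • a) b = T.pairing a b ^ m :=
  Additive.ofMul.injective ((T.pairingLeft b).map_nsmul m a)

theorem pairing_nsmul_right (m : ℕ) (a b : A) : T.pairing a (m • b) = T.pairing a b ^ m := by
  rw [T.pairing_swap, pairing_nsmul_left, ← inv_pow, ← T.pairing_swap]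

theorem pairing_eq_of_mem_closure (T' : TwistedGroupAlgebra F A R') {S G : Set A}
    (h : ∀ a ∈ S, ∀ b ∈ G, T.pairing a b = T'.pairing a b) {a b : A}
    (ha : a ∈ AddSubgroup.closure S) (hb : b ∈ AddSubgroup.closure G) :
    T.pairing a b = T'.pairing a b := by
  have hS : ∀ a ∈ S, T.pairing a b = T'.pairing a b := by
    intro a' ha'
    rw [T.pairing_swap, T'.pairing_swap, inv_inj]
    refine Additive.ofMul.injective
      (AddMonoidHom.eqOn_closure (f := T.pairingLeft a') (g := T'.pairingLeft a') ?_ hb)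
    exact fun b' hb' => congrArg Additive.ofMul
      (by rw [T.pairing_swap, T'.pairing_swap, h a' ha' b' hb'])
  exact Additive.ofMul.injective
    (AddMonoidHom.eqOn_closure (f := T.pairingLeft b) (g := T'.pairingLeft b)
      (fun a' ha' => congrArg Additive.ofMul (hS a' ha')) ha)

def IsMonomial (u : R) (a : A) : Prop :=
  ∃ κ : Fˣ, u = (κ : F) • T.of a

theorem isMonomial_smul_of (κ : Fˣ) (a : A) : T.IsMonomial ((κ : F) • T.of a) a :=
  ⟨κ, rfl⟩

theorem isMonomial_of (a : A) : T.IsMonomial (T.of a) a :=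
  ⟨1, by simp⟩

namespace IsMonomial

variable {T} {u v : R} {a b : A}

theorem mul (hu : T.IsMonomial u a) (hv : T.IsMonomial v b) : T.IsMonomial (u * v) (a + b) := by
  obtain ⟨κ, rfl⟩ := hu
  obtain ⟨κ', rfl⟩ := hv
  refine ⟨κ * κ' * T.cocycle a b, ?_⟩
  rw [smul_mul_smul_comm, T.of_mul, smul_smul]
  push_cast
  rfl

theorem pow (hu : T.IsMonomial u a) (m : ℕ) : T.IsMonomial (u ^ m) (m • a) := by
  induction m with
  | zero => exact ⟨1, by simp [T.of_zero]⟩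
  | succ m ih => simpa only [pow_succ, succ_nsmul] using ih.mul hu

theorem commute_iff (hu : T.IsMonomial u a) (hv : T.IsMonomial v b) :
    Commute u v ↔ T.pairing a b = 1 := by
  obtain ⟨κ, rfl⟩ := hu
  obtain ⟨κ', rfl⟩ := hv
  rw [pairing, mul_inv_eq_one, Commute, SemiconjBy, smul_mul_smul_comm, smul_mul_smul_comm,
    T.of_mul, T.of_mul, add_comm b a, smul_smul, smul_smul, (T.smul_of_left_injective _).eq_iff,
    mul_comm (κ' : F), mul_right_inj' (mul_ne_zero κ.ne_zero κ'.ne_zero), Units.val_inj]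

end IsMonomial

end TwistedGroupAlgebra

theorem commute_pow_of_commute_twisted_general
    {F A R R' : Type*} [Field F]
    [AddCommGroup A]
    [Ring R] [Algebra F R] (T : TwistedGroupAlgebra F A R)
    [Ring R'] [Algebra F R'] (T' : TwistedGroupAlgebra F A R')
    {n r : ℕ} (hrn : r ≤ n) (x : Basis (Fin n) ℤ A)
    (C : AddSubgroup A)
    (hCbasis : C = AddSubgroup.closure (Set.range fun i : Fin r => x (Fin.castLE hrn i)))
    (hcomm : T.IsCommutativeOn C)
    (s : ℕ)
    (hpair_low : ∀ i j : Fin n, (i : ℕ) < r ∨ (j : ℕ) < r →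
      T'.pairing (x i) (x j) = T.pairing (x i) (x j))
    (hpair_high : ∀ i j : Fin n, r ≤ (i : ℕ) → r ≤ (j : ℕ) →
      T'.pairing (x i) (x j) = (T.pairing (x i) (x j)) ^ s)
    (κ : Fin n → Fˣ) (c : Fin n → A) (hc : ∀ j : Fin n, c j ∈ C)
    (hcommute' : ∀ i j : Fin n, r ≤ (i : ℕ) → r ≤ (j : ℕ) →
      Commute (((κ i : F) • T'.of (c i)) * T'.of (x i))
              (((κ j : F) • T'.of (c j)) * T'.of (x j))) :
    ∀ i j : Fin n, r ≤ (i : ℕ) → r ≤ (j : ℕ) →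
      Commute (((κ i : F) • T.of (c i)) * T.of (x i) ^ s)
              (((κ j : F) • T.of (c j)) * T.of (x j) ^ s) := by
  intro i j hi hj
  have hspan : ∀ a, a ∈ AddSubgroup.closure (Set.range x) := by
    intro a
    rw [← Submodule.span_int_eq_addSubgroupClosure, x.span_eq]
    trivial
  have hagree_left : ∀ a ∈ C, ∀ b, T'.pairing a b = T.pairing a b := fun a ha b =>
    T'.pairing_eq_of_mem_closure T (by
      rintro _ ⟨k, rfl⟩ _ ⟨l, rfl⟩
      exact hpair_low _ l (Or.inl (by simp))) (hCbasis ▸ ha) (hspan b)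
  have hagree_right : ∀ a, ∀ b ∈ C, T'.pairing a b = T.pairing a b := fun a b hb =>
    T'.pairing_eq_of_mem_closure T (by
      rintro _ ⟨k, rfl⟩ _ ⟨l, rfl⟩
      exact hpair_low k _ (Or.inr (by simp))) (hspan a) (hCbasis ▸ hb)
  have htrivial : ∀ a ∈ C, ∀ b ∈ C, T.pairing a b = 1 := fun a ha b hb =>
    ((T.isMonomial_of a).commute_iff (T.isMonomial_of b)).1 (hcomm a ha b hb)
  have htwisted : T'.pairing (c i + x i) (c j + x j) = 1 :=
    (((T'.isMonomial_smul_of _ _).mul (T'.isMonomial_of _)).commute_iff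
      ((T'.isMonomial_smul_of _ _).mul (T'.isMonomial_of _))).1 (hcommute' i j hi hj)
  rw [T'.pairing_add_add, hagree_left _ (hc i), hagree_left _ (hc i), hagree_right _ _ (hc j),
    hpair_high i j hi hj, htrivial _ (hc i) _ (hc j), one_mul] at htwisted
  refine (((T.isMonomial_smul_of _ _).mul ((T.isMonomial_of _).pow s)).commute_iff
    ((T.isMonomial_smul_of _ _).mul ((T.isMonomial_of _).pow s))).2 ?_
  rw [T.pairing_add_add, T.pairing_nsmul_right, T.pairing_nsmul_left, T.pairing_nsmul_left,
    T.pairing_nsmul_right, htrivial _ (hc i) _ (hc j), one_mul, ← mul_pow, ← mul_pow,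
    htwisted, one_pow]

/-- **The cocycle-power step in Lemma 3.1.**  Let `F*A` be a twisted group algebra of the free
abelian group `A` with `ℤ`-basis `x₁, …, xₙ`, let `C = ⟨x₁, …, x_r⟩` with `F*C` commutative,
and let `s > 0`.  Let `F*'A` (realized on a ring `R'`) be a twisted group algebra of `A` whose
cocycle `λ'` has commutation values `q'ᵢⱼ = qᵢⱼ` whenever `i ≤ r` or `j ≤ r`, and
`q'ᵢⱼ = qᵢⱼ^s` for `i, j > r` (this is the cocycle of the paper obtained by raising the
`x`-part of the cocycle to its `s`-th power).  If there are monomials `μⱼ = κⱼ·c̄ⱼ ∈ F*C`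
(`j = r+1, …, n`) such that the elements `μⱼ·x̄ⱼ` pairwise commute with respect to the
multiplication twisted by `λ'`, then the elements `μⱼ·x̄ⱼˢ` pairwise commute in `F*A`
itself. -/
theorem commute_pow_of_commute_twisted
    {F A R R' : Type*} [Field F]
    [AddCommGroup A] [Module.Free ℤ A] [Module.Finite ℤ A]
    [Ring R] [Algebra F R] (T : TwistedGroupAlgebra F A R)
    [Ring R'] [Algebra F R'] (T' : TwistedGroupAlgebra F A R')
    {n r : ℕ} (hrn : r ≤ n) (x : Basis (Fin n) ℤ A)
    (C : AddSubgroup A)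
    (hCbasis : C = AddSubgroup.closure (Set.range fun i : Fin r => x (Fin.castLE hrn i)))
    (hcomm : T.IsCommutativeOn C)
    (s : ℕ) (hs : 0 < s)
    (hpair_low : ∀ i j : Fin n, (i : ℕ) < r ∨ (j : ℕ) < r →
      T'.pairing (x i) (x j) = T.pairing (x i) (x j))
    (hpair_high : ∀ i j : Fin n, r ≤ (i : ℕ) → r ≤ (j : ℕ) →
      T'.pairing (x i) (x j) = (T.pairing (x i) (x j)) ^ s)
    (κ : Fin n → Fˣ) (c : Fin n → A) (hc : ∀ j : Fin n, c j ∈ C)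
    (hcommute' : ∀ i j : Fin n, r ≤ (i : ℕ) → r ≤ (j : ℕ) →
      Commute (((κ i : F) • T'.of (c i)) * T'.of (x i))
              (((κ j : F) • T'.of (c j)) * T'.of (x j))) :
    ∀ i j : Fin n, r ≤ (i : ℕ) → r ≤ (j : ℕ) →
      Commute (((κ i : F) • T.of (c i)) * T.of (x i) ^ s)
              (((κ j : F) • T.of (c j)) * T.of (x j) ^ s) :=
  commute_pow_of_commute_twisted_general T T' hrn x C hCbasis hcomm s hpair_low hpair_high κ c hc
    hcommute'
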